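/- For any terms t, t' of the lambda calculus with constructors, if the case-completion ⌈t⌉ reduces in one CaseCase step to t', then t' reduces in finitely many CaseCase steps to ⌈t₀⌉ for some t₀ with t →_CaseCase t₀. -/

import Mathlib

/- Terms of the lambda calculus with `n` constructors (de Bruijn indices).
`Ob n` plays the role of `Option (Tm n)`: a case-binding is a partial map
`Fin n → Ob n` from constructors to terms. -/
mutual
inductive Tm (n : ℕ) : Type where
  | var : ℕ → Tm n
  | app : Tm n → Tm n → Tm n
  | lam : Tm n → Tm n
  | cst : Fin n → Tm n
  | cas : (Fin n → Ob n) → Tm n → Tm n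
inductive Ob (n : ℕ) : Type where
  | none : Ob n
  | some : Tm n → Ob n
end

namespace LC

variable {n : ℕ}

/- Shift free de Bruijn indices `≥ k` by `d`. -/
mutual
def lift (d k : ℕ) : Tm n → Tm n
  | .var i => .var (if i < k then i else i + d)
  | .app t u => .app (lift d k t) (lift d k u)
  | .lam t => .lam (lift d (k+1) t)
  | .cst c => .cst c
  | .cas θ t => .cas (fun c => liftO d k (θ c)) (lift d k t)
def liftO (d k : ℕ) : Ob n → Ob n
  | .none => .none
  | .some t => .some (lift d k t)
end

/- Lift a case-binding (used for the CaseLam rule, where the bound variable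
must not occur free in the binding). -/
def liftB (θ : Fin n → Ob n) : Fin n → Ob n := fun c => liftO 1 0 (θ c)

/- Substitution of `u` for the variable `k` (capture-avoiding). -/
mutual
def subst (u : Tm n) (k : ℕ) : Tm n → Tm n
  | .var i => if i < k then .var i else if i = k then lift k 0 u else .var (i-1)
  | .app t v => .app (subst u k t) (subst u k v)
  | .lam t => .lam (subst u (k+1) t)
  | .cst c => .cst c
  | .cas θ t => .cas (fun c => substO u k (θ c)) (subst u k t)
def substO (u : Tm n) (k : ℕ) : Ob n → Ob n
  | .none => .none
  | .some t => .some (subst u k t)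
end

/- `{θ}·(-)` applied inside an optional branch. -/
def casO (θ : Fin n → Ob n) : Ob n → Ob n
  | .none => .none
  | .some u => .some (.cas θ u)

/- Composition of case-bindings: `(θ∘φ)(c) = {θ}·φ(c)` for `c ∈ dom φ`. -/
def compB (θ φ : Fin n → Ob n) : Fin n → Ob n := fun c => casO θ (φ c)

/- One-step reduction of the lambda calculus with constructors:
AppLam, LamApp, CaseCons, CaseApp, CaseLam, CaseCase, closed under all contexts. -/
inductive Step : Tm n → Tm n → Prop where
  | appLam (t u : Tm n) : Step (.app (.lam t) u) (subst u 0 t)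
  | lamApp (t : Tm n) : Step (.lam (.app (lift 1 0 t) (.var 0))) t
  | caseCons (θ : Fin n → Ob n) (c : Fin n) (u : Tm n) :
      θ c = .some u → Step (.cas θ (.cst c)) u
  | caseApp (θ : Fin n → Ob n) (t u : Tm n) :
      Step (.cas θ (.app t u)) (.app (.cas θ t) u)
  | caseLam (θ : Fin n → Ob n) (t : Tm n) :
      Step (.cas θ (.lam t)) (.lam (.cas (liftB θ) t))
  | caseCase (θ φ : Fin n → Ob n) (t : Tm n) :
      Step (.cas θ (.cas φ t)) (.cas (compB θ φ) t)
  | appL {t t' : Tm n} (u : Tm n) : Step t t' → Step (.app t u) (.app t' u)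
  | appR (t : Tm n) {u u' : Tm n} : Step u u' → Step (.app t u) (.app t u')
  | lamC {t t' : Tm n} : Step t t' → Step (.lam t) (.lam t')
  | casT (θ : Fin n → Ob n) {t t' : Tm n} : Step t t' → Step (.cas θ t) (.cas θ t')
  | casB (θ : Fin n → Ob n) (c : Fin n) {u u' : Tm n} (t : Tm n) :
      θ c = .some u → Step u u' →
      Step (.cas θ t) (.cas (Function.update θ c (.some u')) t)

/- One-step reduction by the CaseCase rule only (closed under all contexts). -/
inductive StepCC : Tm n → Tm n → Prop where
  | caseCase (θ φ : Fin n → Ob n) (t : Tm n) :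
      StepCC (.cas θ (.cas φ t)) (.cas (compB θ φ) t)
  | appL {t t' : Tm n} (u : Tm n) : StepCC t t' → StepCC (.app t u) (.app t' u)
  | appR (t : Tm n) {u u' : Tm n} : StepCC u u' → StepCC (.app t u) (.app t u')
  | lamC {t t' : Tm n} : StepCC t t' → StepCC (.lam t) (.lam t')
  | casT (θ : Fin n → Ob n) {t t' : Tm n} : StepCC t t' → StepCC (.cas θ t) (.cas θ t')
  | casB (θ : Fin n → Ob n) (c : Fin n) {u u' : Tm n} (t : Tm n) :
      θ c = .some u → StepCC u u' →
      StepCC (.cas θ t) (.cas (Function.update θ c (.some u')) t)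

/- One-step reduction λC⁻ : every rule except CaseCase (closed under all contexts). -/
inductive StepM : Tm n → Tm n → Prop where
  | appLam (t u : Tm n) : StepM (.app (.lam t) u) (subst u 0 t)
  | lamApp (t : Tm n) : StepM (.lam (.app (lift 1 0 t) (.var 0))) t
  | caseCons (θ : Fin n → Ob n) (c : Fin n) (u : Tm n) :
      θ c = .some u → StepM (.cas θ (.cst c)) u
  | caseApp (θ : Fin n → Ob n) (t u : Tm n) :
      StepM (.cas θ (.app t u)) (.app (.cas θ t) u)
  | caseLam (θ : Fin n → Ob n) (t : Tm n) :
      StepM (.cas θ (.lam t)) (.lam (.cas (liftB θ) t))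
  | appL {t t' : Tm n} (u : Tm n) : StepM t t' → StepM (.app t u) (.app t' u)
  | appR (t : Tm n) {u u' : Tm n} : StepM u u' → StepM (.app t u) (.app t u')
  | lamC {t t' : Tm n} : StepM t t' → StepM (.lam t) (.lam t')
  | casT (θ : Fin n → Ob n) {t t' : Tm n} : StepM t t' → StepM (.cas θ t) (.cas θ t')
  | casB (θ : Fin n → Ob n) (c : Fin n) {u u' : Tm n} (t : Tm n) :
      θ c = .some u → StepM u u' →
      StepM (.cas θ t) (.cas (Function.update θ c (.some u')) t)

/- A term is defined when none of its subterms is a match failure `{θ}·c` with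
`c ∉ dom θ`. -/
inductive Defined : Tm n → Prop where
  | var (i : ℕ) : Defined (.var i)
  | cst (c : Fin n) : Defined (.cst c)
  | app {t u : Tm n} : Defined t → Defined u → Defined (.app t u)
  | lam {t : Tm n} : Defined t → Defined (.lam t)
  | cas {θ : Fin n → Ob n} {t : Tm n} :
      (∀ c u, θ c = .some u → Defined u) → Defined t →
      (∀ c, t = .cst c → θ c ≠ .none) → Defined (.cas θ t)

/- Hereditarily defined: every reduct (in any number of steps) is defined. -/
def HD (t : Tm n) : Prop := ∀ u, Relation.ReflTransGen Step t u → Defined u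

section Completion
variable [NeZero n]

/- The canonical match failure `{}·c₁` used to fill missing branches. -/
def failTm : Tm n := .cas (fun _ => .none) (.cst 0)

/- Case-completion: replace every case-binding by its total completion,
filling each missing branch with `{}·c₁`. -/
mutual
def cpl : Tm n → Tm n
  | .var i => .var i
  | .app t u => .app (cpl t) (cpl u)
  | .lam t => .lam (cpl t)
  | .cst c => .cst c
  | .cas θ t => .cas (fun c => .some (cplO (θ c))) (cpl t)
def cplO : Ob n → Tm n
  | .none => failTm
  | .some u => cpl u
end

end Completion

/- The structural measure μ. -/
mutual
def mes : Tm n → ℕ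
  | .var _ => 1
  | .cst _ => 1
  | .lam t => mes t + 1
  | .app t u => mes t + mes u
  | .cas θ t => mes t * ((∑ c : Fin n, mesO (θ c)) + 2)
def mesO : Ob n → ℕ
  | .none => 0
  | .some t => mes t
end

end LC

/-!
Induct on the CaseCase step out of `⌈t⌉`. Every redex of `⌈t⌉` is the completion of a redex
of `t`, since the filled branches `{}·c₁` contain none. Contracting the completion of a redex
`{θ}·({φ}·s)` yields `{⌈θ⌉∘⌈φ⌉}·⌈s⌉`, which differs from `⌈{θ∘φ}·s⌉` only in the branches
`c ∉ dom φ`; there it holds `{⌈θ⌉}·({}·c₁)`, which CaseCase-reduces in one step to `{}·c₁`.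
-/

namespace LC

open Relation

variable {n : ℕ}

namespace StepCC

theorem reflTransGen_appL {t t' : Tm n} (u : Tm n) (h : ReflTransGen StepCC t t') :
    ReflTransGen StepCC (.app t u) (.app t' u) :=
  h.lift (Tm.app · u) fun _ _ => appL u

theorem reflTransGen_appR (t : Tm n) {u u' : Tm n} (h : ReflTransGen StepCC u u') :
    ReflTransGen StepCC (.app t u) (.app t u') :=
  h.lift (Tm.app t) fun _ _ => appR t

theorem reflTransGen_lamC {t t' : Tm n} (h : ReflTransGen StepCC t t') :
    ReflTransGen StepCC (.lam t) (.lam t') :=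
  h.lift Tm.lam fun _ _ => lamC

theorem reflTransGen_casT (θ : Fin n → Ob n) {t t' : Tm n} (h : ReflTransGen StepCC t t') :
    ReflTransGen StepCC (.cas θ t) (.cas θ t') :=
  h.lift (Tm.cas θ) fun _ _ => casT θ

theorem reflTransGen_casB (θ : Fin n → Ob n) (c : Fin n) {u u' : Tm n} (t : Tm n)
    (hc : θ c = .some u) (h : ReflTransGen StepCC u u') :
    ReflTransGen StepCC (.cas θ t) (.cas (Function.update θ c (.some u')) t) := by
  induction h with
  | refl => rw [← hc, Function.update_eq_self]
  | @tail v v' _ hv ih =>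
    have hstep := casB (Function.update θ c (.some v)) c t (by simp) hv
    rw [Function.update_idem] at hstep
    exact ih.tail hstep

theorem reflTransGen_cas_of_branches {θ θ' : Fin n → Ob n} (t : Tm n)
    (h : ∀ c, θ' c = θ c ∨
      ∃ u u', θ c = .some u ∧ θ' c = .some u' ∧ ReflTransGen StepCC u u') :
    ReflTransGen StepCC (.cas θ t) (.cas θ' t) := by
  classical
  suffices ∀ s : Finset (Fin n),
      ReflTransGen StepCC (.cas θ t) (.cas (fun c => if c ∈ s then θ' c else θ c) t) by
    simpa using this .univ
  intro s
  induction s using Finset.induction_on with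
  | empty => exact .refl
  | @insert a s ha ih =>
    have hupdate : (fun c => if c ∈ insert a s then θ' c else θ c) =
        Function.update (fun c => if c ∈ s then θ' c else θ c) a (θ' a) := by
      ext1 c
      by_cases hc : c = a <;> simp [hc, ha]
    rw [hupdate]
    refine ih.trans ?_
    rcases h a with h_eq | ⟨u, u', hu, hu', hred⟩
    · rw [h_eq, show θ a = (fun c => if c ∈ s then θ' c else θ c) a by simp [ha],
        Function.update_eq_self]
    · rw [hu']
      exact reflTransGen_casB _ a t (by simpa [ha] using hu) hred

end StepCC

section Completion

variable [NeZero n]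

def cplB (θ : Fin n → Ob n) : Fin n → Ob n := fun c => .some (cplO (θ c))

theorem cpl_cas (θ : Fin n → Ob n) (t : Tm n) : cpl (.cas θ t) = .cas (cplB θ) (cpl t) := by
  rw [cpl]; rfl

theorem cplB_update (θ : Fin n → Ob n) (c : Fin n) (v : Tm n) :
    cplB (Function.update θ c (.some v)) = Function.update (cplB θ) c (.some (cpl v)) := by
  ext1 c'
  by_cases hc : c' = c
  · subst hc; simp [cplB, cplO]
  · simp [cplB, hc]

theorem exists_of_cpl_eq_app {t a b : Tm n} (h : cpl t = .app a b) :
    ∃ a₀ b₀, t = .app a₀ b₀ ∧ cpl a₀ = a ∧ cpl b₀ = b := by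
  cases t <;> simp_all [cpl]

theorem exists_of_cpl_eq_lam {t a : Tm n} (h : cpl t = .lam a) :
    ∃ a₀, t = .lam a₀ ∧ cpl a₀ = a := by
  cases t <;> simp_all [cpl]

theorem exists_of_cpl_eq_cas {t u : Tm n} {ψ : Fin n → Ob n} (h : cpl t = .cas ψ u) :
    ∃ θ s, t = .cas θ s ∧ cplB θ = ψ ∧ cpl s = u := by
  cases t <;> simp only [cpl, reduceCtorEq, Tm.cas.injEq] at h
  exact ⟨_, _, rfl, h⟩

theorem not_stepCC_failTm {u : Tm n} : ¬ StepCC failTm u := by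
  rintro (_ | _ | _ | _ | ⟨_, h⟩ | ⟨_, _, _, hc⟩)
  · cases h
  · cases hc

theorem exists_eq_some_of_stepCC_cplO {o : Ob n} {u : Tm n} (h : StepCC (cplO o) u) :
    ∃ v, o = .some v := by
  cases o with
  | none => exact absurd h not_stepCC_failTm
  | some v => exact ⟨v, rfl⟩

theorem stepCC_cas_failTm (θ : Fin n → Ob n) : StepCC (.cas θ failTm) failTm := by
  unfold failTm
  have hcomp : compB θ (fun _ => .none) = fun _ => .none := rfl
  simpa only [hcomp] using StepCC.caseCase θ (fun _ => .none) (.cst 0)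

theorem reflTransGen_cas_compB_cplB (θ φ : Fin n → Ob n) (t : Tm n) :
    ReflTransGen StepCC (.cas (compB (cplB θ) (cplB φ)) t) (.cas (cplB (compB θ φ)) t) := by
  refine StepCC.reflTransGen_cas_of_branches t fun c => ?_
  rcases hc : φ c with _ | v
  · refine .inr ⟨_, _, ?_, ?_, .single (stepCC_cas_failTm (cplB θ))⟩ <;>
      simp [cplB, compB, casO, cplO, hc]
  · exact .inl (by simp [cplB, compB, casO, cplO, hc, cpl_cas])

theorem reflTransGen_cas_update_cplB (θ : Fin n → Ob n) (c : Fin n) (s : Tm n) {u v : Tm n}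
    (h : ReflTransGen StepCC u (cpl v)) :
    ReflTransGen StepCC (.cas (Function.update (cplB θ) c (.some u)) (cpl s))
      (cpl (.cas (Function.update θ c (.some v)) s)) := by
  simpa only [cpl_cas, cplB_update, Function.update_idem] using
    StepCC.reflTransGen_casB (Function.update (cplB θ) c _) c (cpl s) (by simp) h

end Completion

/-- CaseCase reduction on completed terms: if `⌈t⌉` reduces in one CaseCase
step to `t'`, then `t'` reduces in finitely many CaseCase steps to `⌈t₀⌉` for
some `t₀` with `t →_CaseCase t₀`. -/
theorem cpl_stepCC {n : ℕ} [NeZero n] {t t' : Tm n}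
    (h : StepCC (cpl t) t') :
    ∃ t₀ : Tm n, StepCC t t₀ ∧ Relation.ReflTransGen StepCC t' (cpl t₀) := by
  generalize hs : cpl t = s at h
  induction h generalizing t with
  | caseCase _ _ _ =>
    obtain ⟨θ, _, rfl, rfl, hinner⟩ := exists_of_cpl_eq_cas hs
    obtain ⟨φ, s, rfl, rfl, rfl⟩ := exists_of_cpl_eq_cas hinner
    exact ⟨_, .caseCase θ φ s,
      by simpa only [cpl_cas] using reflTransGen_cas_compB_cplB θ φ (cpl s)⟩
  | appL _ _ ih =>
    obtain ⟨a, b, rfl, rfl, rfl⟩ := exists_of_cpl_eq_app hs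
    obtain ⟨a₀, ha, hr⟩ := ih rfl
    exact ⟨.app a₀ b, .appL b ha,
      by simpa only [cpl] using StepCC.reflTransGen_appL (cpl b) hr⟩
  | appR _ _ ih =>
    obtain ⟨a, b, rfl, rfl, rfl⟩ := exists_of_cpl_eq_app hs
    obtain ⟨b₀, hb, hr⟩ := ih rfl
    exact ⟨.app a b₀, .appR a hb,
      by simpa only [cpl] using StepCC.reflTransGen_appR (cpl a) hr⟩
  | lamC _ ih =>
    obtain ⟨a, rfl, rfl⟩ := exists_of_cpl_eq_lam hs
    obtain ⟨a₀, ha, hr⟩ := ih rfl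
    exact ⟨.lam a₀, .lamC ha,
      by simpa only [cpl] using StepCC.reflTransGen_lamC hr⟩
  | casT _ _ ih =>
    obtain ⟨θ, s, rfl, rfl, rfl⟩ := exists_of_cpl_eq_cas hs
    obtain ⟨s₀, hs₀, hr⟩ := ih rfl
    exact ⟨.cas θ s₀, .casT θ hs₀,
      by simpa only [cpl_cas] using StepCC.reflTransGen_casT (cplB θ) hr⟩
  | casB _ c _ hc hu ih =>
    obtain ⟨θ, s, rfl, rfl, rfl⟩ := exists_of_cpl_eq_cas hs
    obtain rfl := Ob.some.inj hc
    obtain ⟨v, hv⟩ := exists_eq_some_of_stepCC_cplO hu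
    obtain ⟨v₀, hv₀, hr⟩ := ih (t := v) (by rw [hv, cplO])
    exact ⟨_, .casB θ c s hv hv₀, reflTransGen_cas_update_cplB θ c s hr⟩

end LC
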